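/- arXiv:2201.07767 — 3 statements merged into one kernel-verified Lean document; each statement's English description precedes it below -/
import Mathlib

section
/- Let n ≥ 2, b ≥ 3, and let C1, Cc2, Cc22, Cc4 be real numbers with C1 > 0 satisfying: (i) Cc22 ≥ ((2n-1)(b+2n-4))/((2n-3)(b+2n-2)) · Cc2²/C1, and (ii) 7·Cc22 - 4·Cc4 = 5(2n-1)·Cc2²/((2n-3)·C1). Then (Cc22 - 2·Cc4)·(b + 2n - 9) ≤ 10·Cc4. -/
theorem stmt_1 (n : ℕ) (hn : 2 ≤ n) (b : ℝ) (hb : b ≥ 3)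
    (C1 Cc2 Cc22 Cc4 : ℝ) (hC1 : C1 > 0)
    (h1 : Cc22 ≥ ((2 * (n : ℝ) - 1) * (b + 2 * n - 4)) /
        ((2 * (n : ℝ) - 3) * (b + 2 * n - 2)) * (Cc2 ^ 2 / C1))
    (h2 : 7 * Cc22 - 4 * Cc4 = 5 * (2 * (n : ℝ) - 1) * Cc2 ^ 2 / ((2 * (n : ℝ) - 3) * C1)) :
    (Cc22 - 2 * Cc4) * (b + 2 * n - 9) ≤ 10 * Cc4 := by
  have hN : (2:ℝ) ≤ (n : ℝ) := by exact_mod_cast hn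
  have hk : (0:ℝ) < 2 * (n:ℝ) - 3 := by linarith
  have hB : (0:ℝ) < b + 2 * (n:ℝ) - 2 := by linarith
  have hpos : (0:ℝ) < (2 * (n:ℝ) - 3) * (b + 2 * (n:ℝ) - 2) * C1 :=
    mul_pos (mul_pos hk hB) hC1
  have hkC1 : (0:ℝ) < (2 * (n:ℝ) - 3) * C1 := mul_pos hk hC1
  rw [ge_iff_le, div_mul_div_comm, div_le_iff₀ hpos] at h1
  rw [eq_div_iff (ne_of_gt hkC1)] at h2
  have h3 : 4 * ((2*(n:ℝ)-3) * C1) * (10 * Cc4 - (Cc22 - 2*Cc4) * (b + 2*(n:ℝ) - 9)) =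
      10 * (Cc22 * ((2*(n:ℝ)-3) * (b + 2*(n:ℝ) - 2) * C1)
        - (2*(n:ℝ)-1) * (b + 2*(n:ℝ) - 4) * Cc2 ^ 2) := by
    linear_combination (8 - 2 * (b + 2*(n:ℝ))) * h2
  nlinarith [h3, h1, hkC1]
end

section
/- Let n ≥ 2 and set A0 = 1/(2^n·n!), A1 = (n+3)/(2^n·(n-1)!), A2 = (3n²+17n+26)/(3·2^{n+1}·(n-2)!). Then 2n·A0·A2 < (n-1)·A1², and 1/(1 - 2n·A0·A2/((n-1)·A1²)) - (2n-2) = n + 17 + 12/(n+1). -/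
open Nat in
theorem stmt_6 (n : ℕ) (hn : 2 ≤ n)
    (A0 A1 A2 : ℝ)
    (hA0 : A0 = 1 / (2 ^ n * (n ! : ℝ)))
    (hA1 : A1 = ((n : ℝ) + 3) / (2 ^ n * ((n - 1)! : ℝ)))
    (hA2 : A2 = (3 * (n : ℝ) ^ 2 + 17 * (n : ℝ) + 26) / (3 * 2 ^ (n + 1) * ((n - 2)! : ℝ))) :
    2 * (n : ℝ) * A0 * A2 < ((n : ℝ) - 1) * A1 ^ 2 ∧
    1 / (1 - 2 * (n : ℝ) * A0 * A2 / (((n : ℝ) - 1) * A1 ^ 2)) - (2 * (n : ℝ) - 2) =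
      (n : ℝ) + 17 + 12 / ((n : ℝ) + 1) := by
  obtain ⟨m, rfl⟩ : ∃ m, n = m + 2 := ⟨n - 2, by omega⟩
  simp only [show m + 2 - 1 = m + 1 from rfl, show m + 2 - 2 = m from rfl,
    Nat.factorial_succ] at hA0 hA1 hA2
  push_cast at hA0 hA1 hA2 ⊢
  set x : ℝ := (m : ℝ) with hx
  have hx0 : 0 ≤ x := Nat.cast_nonneg m
  have hF : (0 : ℝ) < (m ! : ℝ) := by exact_mod_cast m.factorial_pos
  set F : ℝ := (m ! : ℝ) with hFdef
  have hP : (0 : ℝ) < (2 : ℝ) ^ (m + 2) := by positivity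
  set P : ℝ := (2 : ℝ) ^ (m + 2) with hPdef
  have hP1 : (2 : ℝ) ^ (m + 2 + 1) = 2 * P := by rw [hPdef]; ring
  rw [hP1] at hA2
  have hFne : F ≠ 0 := ne_of_gt hF
  have hPne : P ≠ 0 := ne_of_gt hP
  have h1 : (0 : ℝ) < x + 1 := by linarith
  have h5 : (0 : ℝ) < x + 5 := by linarith
  have h1ne : x + 1 ≠ 0 := ne_of_gt h1
  have h2ne : x + 2 ≠ 0 := by positivity
  have h3ne : x + 3 ≠ 0 := by positivity
  have h5ne : x + 5 ≠ 0 := ne_of_gt h5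
  have e1 : 2 * (x + 2) * A0 * A2
      = (3 * x ^ 2 + 29 * x + 72) / (3 * ((x + 1) * P ^ 2 * F ^ 2)) := by
    rw [hA0, hA2]
    field_simp
    ring
  have e2 : (x + 2 - 1) * A1 ^ 2
      = (x + 5) ^ 2 / ((x + 1) * P ^ 2 * F ^ 2) := by
    rw [hA1]
    field_simp
    ring
  have hD : (0 : ℝ) < (x + 1) * P ^ 2 * F ^ 2 := by positivity
  constructor
  · rw [e1, e2]
    rw [div_lt_div_iff₀ (by positivity) (by positivity)]
    nlinarith [hD, mul_pos hD hD]
  · have hr : 2 * (x + 2) * A0 * A2 / ((x + 2 - 1) * A1 ^ 2)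
        = (3 * x ^ 2 + 29 * x + 72) / (3 * (x + 5) ^ 2) := by
      rw [e1, e2, div_div_div_eq]
      field_simp
    rw [hr]
    have h1r : (1 : ℝ) - (3 * x ^ 2 + 29 * x + 72) / (3 * (x + 5) ^ 2)
        = (x + 3) / (3 * (x + 5) ^ 2) := by
      field_simp
      ring
    rw [h1r, one_div_div]
    field_simp
    ring
end

section
/- Let n ≥ 3, C1 > 0, a real, and set A0 = C1/(2n)!, A1 = A0·(n·a + n(n-1)), A2 = A0·((n(n-1)/2)a² + (n-1)²·n·a + (3n-1)n(n-1)(n-2)/6). Define Cc22 = 144(2n-4)!·(4A2 - (n-1)A1²/(nA0)) and Cc4 = 144(2n-4)!·(7A2 - 3(n-1)A1²/(nA0)). Then ((1/12)·Cc22 - (1/6)·Cc4)/C1 = 5(n+1)/((2n-1)(2n-3)); in particular the value is independent of a. -/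
open Nat in
theorem stmt_13 (n : ℕ) (hn : 3 ≤ n) (C1 : ℝ) (hC1 : C1 > 0) (a : ℝ)
    (A0 A1 A2 : ℝ)
    (hA0 : A0 = C1 / ((2 * n)! : ℝ))
    (hA1 : A1 = A0 * ((n : ℝ) * a + (n : ℝ) * ((n : ℝ) - 1)))
    (hA2 : A2 = A0 * (((n : ℝ) * ((n : ℝ) - 1) / 2) * a ^ 2 +
      ((n : ℝ) - 1) ^ 2 * (n : ℝ) * a +
      (3 * (n : ℝ) - 1) * (n : ℝ) * ((n : ℝ) - 1) * ((n : ℝ) - 2) / 6))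
    (Cc22 Cc4 : ℝ)
    (hCc22 : Cc22 = 144 * ((2 * n - 4)! : ℝ) *
      (4 * A2 - ((n : ℝ) - 1) * A1 ^ 2 / ((n : ℝ) * A0)))
    (hCc4 : Cc4 = 144 * ((2 * n - 4)! : ℝ) *
      (7 * A2 - 3 * ((n : ℝ) - 1) * A1 ^ 2 / ((n : ℝ) * A0))) :
    ((1 / 12) * Cc22 - (1 / 6) * Cc4) / C1 =
      5 * ((n : ℝ) + 1) / ((2 * (n : ℝ) - 1) * (2 * (n : ℝ) - 3)) := by
  obtain ⟨m, rfl⟩ : ∃ m, n = m + 3 := ⟨n - 3, by omega⟩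
  have hfact : ((2 * (m + 3))! : ℝ) =
      ((2 * (m + 3) - 4)! : ℝ) * (2 * (m + 3)) * (2 * (m + 3) - 1) *
        (2 * (m + 3) - 2) * (2 * (m + 3) - 3) := by
    have h1 : 2 * (m + 3) = (2 * m + 2) + 4 := by ring
    have h2 : 2 * (m + 3) - 4 = 2 * m + 2 := by omega
    rw [h1]
    have h3 : 2 * m + 2 + 4 - 4 = 2 * m + 2 := rfl
    rw [h3]
    push_cast [Nat.factorial_succ]
    ring
  have hf0 : ((2 * (m + 3))! : ℝ) ≠ 0 := by positivity
  have hf4 : ((2 * (m + 3) - 4)! : ℝ) ≠ 0 := by positivity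
  have hn0 : ((m : ℝ) + 3) ≠ 0 := by positivity
  have hA0ne : A0 ≠ 0 := by
    rw [hA0]; exact div_ne_zero (ne_of_gt hC1) hf0
  have hkey : ((m : ℝ) + 3) = ((m + 3 : ℕ) : ℝ) := by push_cast; ring
  subst hCc22 hCc4 hA1 hA2
  rw [hA0] at *
  push_cast
  rw [hfact]
  have hm : (0:ℝ) ≤ (m:ℝ) := Nat.cast_nonneg m
  have hd1 : (2 * ((m : ℝ) + 3) - 1) ≠ 0 := by nlinarith
  have hd3 : (2 * ((m : ℝ) + 3) - 3) ≠ 0 := by nlinarith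
  have hd2 : (2 * ((m : ℝ) + 3) - 2) ≠ 0 := by nlinarith
  have hd0 : (2 * ((m : ℝ) + 3)) ≠ 0 := by nlinarith
  field_simp
  ring_nf
  have hm2 : (2 + (m:ℝ)) ≠ 0 := by positivity
  field_simp
  ring
end
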